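/- For integers n, r, k with n ≥ r ≥ 1, ∑_{j=r}^{n} S_r(n,j) c_j^{(k)} = c_{r, n-r+1}^{(k)}, where c_{r,α}^{(k)} is the shifted poly-Cauchy number of the first kind. -/

import Mathlib

/-!
Write `(x)_j` for the falling factorial `descPochhammer ℝ j`. Its coefficients are the signed
Stirling numbers of the first kind, so `c_{j,α}^{(k)} = L_α((x)_j)` for the linear functional
`L_α : x^m ↦ (m + α)^{-k}`, and `c_j^{(k)} = L_1((x)_j)`. The r-Stirling numbers of the second
kind expand `x^{n-r} (x)_r = ∑_j S_r(n,j) (x)_j`, by their recurrence and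
`x (x)_j = (x)_{j+1} + j (x)_j`. Applying `L_1` and using
`L_α(x^d p) = L_{α+d}(p)` gives the identity.
-/

open Finset

/-- Unsigned Stirling numbers of the first kind. -/
def stirling1 : ℕ → ℕ → ℕ
  | 0, 0 => 1
  | 0, _ + 1 => 0
  | _ + 1, 0 => 0
  | n + 1, k + 1 => n * stirling1 n (k + 1) + stirling1 n k

/-- Stirling numbers of the second kind. -/
def stirling2 : ℕ → ℕ → ℕ
  | 0, 0 => 1
  | 0, _ + 1 => 0
  | _ + 1, 0 => 0
  | n + 1, k + 1 => (k + 1) * stirling2 n (k + 1) + stirling2 n k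

/-- Unsigned r-Stirling numbers of the first kind. -/
def rStirling1 (r : ℕ) : ℕ → ℕ → ℕ
  | 0, m => if r = 0 ∧ m = 0 then 1 else 0
  | n + 1, m =>
    if n + 1 < r then 0
    else if n + 1 = r then (if m = r then 1 else 0)
    else n * rStirling1 r n m + (match m with | 0 => 0 | m' + 1 => rStirling1 r n m')

/-- r-Stirling numbers of the second kind. -/
def rStirling2 (r : ℕ) : ℕ → ℕ → ℕ
  | 0, m => if r = 0 ∧ m = 0 then 1 else 0
  | n + 1, m =>
    if n + 1 < r then 0
    else if n + 1 = r then (if m = r then 1 else 0)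
    else m * rStirling2 r n m + (match m with | 0 => 0 | m' + 1 => rStirling2 r n m')

/-- Poly-Cauchy numbers of the first kind `c_n^{(k)}`. -/
noncomputable def polyCauchy (k : ℤ) (n : ℕ) : ℝ :=
  ∑ ℓ ∈ range (n + 1), (-1 : ℝ) ^ (n - ℓ) * stirling1 n ℓ / ((ℓ : ℝ) + 1) ^ k

/-- Poly-Cauchy numbers of the second kind `ĉ_n^{(k)}`. -/
noncomputable def polyCauchy2 (k : ℤ) (n : ℕ) : ℝ :=
  (-1 : ℝ) ^ n * ∑ ℓ ∈ range (n + 1), (stirling1 n ℓ : ℝ) / ((ℓ : ℝ) + 1) ^ k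

/-- Poly-Cauchy polynomials of the first kind `c_n^{(k)}(z)`. -/
noncomputable def polyCauchyPoly (k : ℤ) (n : ℕ) (z : ℝ) : ℝ :=
  ∑ m ∈ range (n + 1), (stirling1 n m : ℝ) * (-1 : ℝ) ^ (n - m) *
    ∑ i ∈ range (m + 1), (m.choose i : ℝ) * z ^ (m - i) / ((i : ℝ) + 1) ^ k

/-- Shifted poly-Cauchy numbers of the first kind `c_{n,α}^{(k)}`. -/
noncomputable def shiftedPolyCauchy (k : ℤ) (n : ℕ) (α : ℝ) : ℝ :=
  ∑ m ∈ range (n + 1), (stirling1 n m : ℝ) * (-1 : ℝ) ^ (n - m) / ((m : ℝ) + α) ^ k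

/-- Shifted poly-Cauchy numbers of the second kind `ĉ_{n,α}^{(k)}`. -/
noncomputable def shiftedPolyCauchy2 (k : ℤ) (n : ℕ) (α : ℝ) : ℝ :=
  (-1 : ℝ) ^ n * ∑ m ∈ range (n + 1), (stirling1 n m : ℝ) / ((m : ℝ) + α) ^ k

open Polynomial

theorem stirling1_eq_zero_of_lt {n ℓ : ℕ} (h : n < ℓ) : stirling1 n ℓ = 0 := by
  induction n generalizing ℓ with
  | zero => cases ℓ with
    | zero => omega
    | succ ℓ => rfl
  | succ n ih => cases ℓ with
    | zero => omega
    | succ ℓ => simp [stirling1, ih (show n < ℓ + 1 by omega), ih (show n < ℓ by omega)]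

theorem coeff_descPochhammer (R : Type*) [CommRing R] (j ℓ : ℕ) :
    (descPochhammer R j).coeff ℓ = (-1) ^ (j - ℓ) * stirling1 j ℓ := by
  induction j generalizing ℓ with
  | zero => cases ℓ <;> simp [stirling1, coeff_one]
  | succ j ih =>
    cases ℓ with
    | zero => simp [coeff_zero_eq_eval_zero, stirling1]
    | succ ℓ =>
      rw [descPochhammer_succ_right, ← C_eq_natCast, coeff_mul_X_sub_C, ih, ih]
      rcases lt_or_ge ℓ j with hℓ | hℓ
      · obtain ⟨d, rfl⟩ := Nat.exists_eq_add_of_lt hℓ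
        simp only [stirling1, show ℓ + d + 1 - ℓ = d + 1 by omega,
          show ℓ + d + 1 + 1 - (ℓ + 1) = d + 1 by omega,
          show ℓ + d + 1 - (ℓ + 1) = d by omega]
        push_cast
        ring
      · simp [stirling1, stirling1_eq_zero_of_lt (show j < ℓ + 1 by omega),
          show j - (ℓ + 1) = 0 by omega, show j + 1 - (ℓ + 1) = j - ℓ by omega]

theorem rStirling2_self (r j : ℕ) : rStirling2 r r j = if j = r then 1 else 0 := by
  cases r <;> simp [rStirling2]

theorem rStirling2_eq_zero {r n j : ℕ} (h : j < r ∨ n < j) : rStirling2 r n j = 0 := by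
  induction n generalizing j with
  | zero =>
    simp only [rStirling2, ite_eq_right_iff, one_ne_zero, imp_false, not_and]
    omega
  | succ n ih =>
    simp only [rStirling2]
    split_ifs
    · rfl
    · omega
    · rfl
    · rw [ih (by omega)]
      cases j with
      | zero => rfl
      | succ j => simp [ih (show j < r ∨ n < j by omega)]

theorem rStirling2_succ_zero {r n : ℕ} (h : r ≤ n) : rStirling2 r (n + 1) 0 = 0 := by
  simp [rStirling2, show ¬ n + 1 < r by omega, show n + 1 ≠ r by omega]

theorem rStirling2_succ_succ {r n : ℕ} (h : r ≤ n) (j : ℕ) :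
    rStirling2 r (n + 1) (j + 1) = (j + 1) * rStirling2 r n (j + 1) + rStirling2 r n j := by
  simp [rStirling2, show ¬ n + 1 < r by omega, show n + 1 ≠ r by omega]

theorem sum_rStirling2_smul_descPochhammer (R : Type*) [CommRing R] {r n : ℕ} (h : r ≤ n) :
    ∑ j ∈ range (n + 1), (rStirling2 r n j : R) • descPochhammer R j =
      X ^ (n - r) * descPochhammer R r := by
  induction n, h using Nat.le_induction with
  | base => simp [rStirling2_self]
  | succ n h ih =>
    have hX (j : ℕ) :
        X * descPochhammer R j = descPochhammer R (j + 1) + (j : R) • descPochhammer R j := by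
      rw [descPochhammer_succ_right, smul_eq_C_mul, C_eq_natCast]
      ring
    set f : ℕ → R[X] := fun j => ((j : R) * rStirling2 r n j) • descPochhammer R j
    have shift : ∑ j ∈ range (n + 1), f (j + 1) = ∑ j ∈ range (n + 1), f j := by
      have h0 : f 0 = 0 := by simp [f]
      have hn : f (n + 1) = 0 := by simp [f, rStirling2_eq_zero (.inr n.lt_succ_self)]
      rw [← add_zero (∑ j ∈ range (n + 1), f (j + 1)), ← h0, ← sum_range_succ',
        sum_range_succ, hn, add_zero]
    calc ∑ j ∈ range (n + 1 + 1), (rStirling2 r (n + 1) j : R) • descPochhammer R j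
        = ∑ j ∈ range (n + 1),
            (f (j + 1) + (rStirling2 r n j : R) • descPochhammer R (j + 1)) := by
          rw [sum_range_succ', rStirling2_succ_zero h]
          simp [rStirling2_succ_succ h, f, add_smul]
      _ = ∑ j ∈ range (n + 1), (f j + (rStirling2 r n j : R) • descPochhammer R (j + 1)) := by
          rw [sum_add_distrib, sum_add_distrib, shift]
      _ = X * ∑ j ∈ range (n + 1), (rStirling2 r n j : R) • descPochhammer R j := by
          rw [mul_sum]
          refine sum_congr rfl fun j _ => ?_
          rw [mul_smul_comm, hX, smul_add, smul_smul, add_comm, mul_comm]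
      _ = X ^ (n + 1 - r) * descPochhammer R r := by
          rw [ih, ← mul_assoc, ← pow_succ', show n + 1 - r = n - r + 1 by omega]

noncomputable def cauchyFunctional (k : ℤ) (α : ℝ) : ℝ[X] →ₗ[ℝ] ℝ :=
  lsum fun m => (((m : ℝ) + α) ^ k)⁻¹ • LinearMap.id

theorem cauchyFunctional_monomial (k : ℤ) (α : ℝ) (m : ℕ) (a : ℝ) :
    cauchyFunctional k α (monomial m a) = a / ((m : ℝ) + α) ^ k := by
  simp [cauchyFunctional, div_eq_inv_mul]

theorem cauchyFunctional_X_pow_mul (k : ℤ) (α : ℝ) (d : ℕ) (p : ℝ[X]) :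
    cauchyFunctional k α (X ^ d * p) = cauchyFunctional k (α + d) p := by
  induction p using Polynomial.induction_on' with
  | add p q hp hq => rw [mul_add, map_add, map_add, hp, hq]
  | monomial m a =>
    rw [X_pow_mul_monomial, cauchyFunctional_monomial, cauchyFunctional_monomial]
    push_cast
    ring_nf

theorem cauchyFunctional_descPochhammer (k : ℤ) (α : ℝ) (n : ℕ) :
    cauchyFunctional k α (descPochhammer ℝ n) = shiftedPolyCauchy k n α := by
  rw [cauchyFunctional, lsum_apply, sum_over_range' _ (by simp) (n + 1)
    (by rw [descPochhammer_natDegree]; omega), shiftedPolyCauchy]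
  refine sum_congr rfl fun m _ => ?_
  simp only [coeff_descPochhammer, smul_eq_mul, LinearMap.smul_apply, LinearMap.id_apply]
  ring

theorem polyCauchy_eq_shiftedPolyCauchy_one (k : ℤ) (n : ℕ) :
    polyCauchy k n = shiftedPolyCauchy k n 1 := by
  simp only [polyCauchy, shiftedPolyCauchy, mul_comm]

theorem stmt15_general (n r : ℕ) (k : ℤ) (hn : r ≤ n) :
    ∑ j ∈ Finset.Icc r n, (rStirling2 r n j : ℝ) * polyCauchy k j =
      shiftedPolyCauchy k r ((n : ℝ) - (r : ℝ) + 1) := by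
  calc ∑ j ∈ Icc r n, (rStirling2 r n j : ℝ) * polyCauchy k j
      = ∑ j ∈ range (n + 1), (rStirling2 r n j : ℝ) * polyCauchy k j := by
        refine sum_subset (fun j hj => by simp only [mem_Icc, mem_range] at hj ⊢; omega)
          fun j _ hj => ?_
        rw [rStirling2_eq_zero (by simp only [mem_Icc] at hj; omega)]
        simp
    _ = cauchyFunctional k 1
          (∑ j ∈ range (n + 1), (rStirling2 r n j : ℝ) • descPochhammer ℝ j) := by
        simp only [map_sum, map_smul, cauchyFunctional_descPochhammer,
          polyCauchy_eq_shiftedPolyCauchy_one, smul_eq_mul]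
    _ = shiftedPolyCauchy k r ((n : ℝ) - (r : ℝ) + 1) := by
        rw [sum_rStirling2_smul_descPochhammer ℝ hn, cauchyFunctional_X_pow_mul,
          cauchyFunctional_descPochhammer, Nat.cast_sub hn]
        ring_nf

theorem stmt15 (n r : ℕ) (k : ℤ) (hr : 1 ≤ r) (hn : r ≤ n) :
    ∑ j ∈ Finset.Icc r n, (rStirling2 r n j : ℝ) * polyCauchy k j =
      shiftedPolyCauchy k r ((n : ℝ) - (r : ℝ) + 1) :=
  stmt15_general n r k hn
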